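/- arXiv:1201.6276 — 5 statements merged into one kernel-verified Lean document; each statement's English description precedes it below -/
import Mathlib

section
/- Let K be a field, let n ≥ 2 and 2 ≤ m ≤ n, and let h = X_0 · X_1 ⋯ X_{m-1} be the normal crossing polynomial in the polynomial ring R = MvPolynomial (Fin n) K. Then the Jacobian ideal of h, i.e. the ideal generated by the partial derivatives pderiv i h for i < n, equals the intersection ⨅_{0 ≤ i < j < m} Ideal.span {X_i, X_j} of the pair ideals (X_i, X_j). -/
/-!
The nonzero partial derivatives of `X₀ ⋯ X_{m-1}` are the monomials `∏_{j ≠ k} X_j`, `k < m`.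
Both sides are monomial ideals, so membership is decided monomial by monomial: an exponent `e`
lies in the Jacobian ideal iff at most one of `e 0, …, e (m-1)` vanishes, and it lies in every
`(X_i, X_j)` iff no two of them vanish.
-/

namespace Finset

variable {α : Type*} [LinearOrder α]

theorem Nonempty.exists_forall_mem_erase_iff_forall_lt_or {s : Finset α} (hs : s.Nonempty)
    (P : α → Prop) :
    (∃ k ∈ s, ∀ j ∈ s.erase k, P j) ↔ ∀ i ∈ s, ∀ j ∈ s, i < j → P i ∨ P j := by
  constructor
  · rintro ⟨k, -, hk⟩ i hi j hj hij
    by_cases hik : i = k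
    · exact .inr (hk j (mem_erase.mpr ⟨hik ▸ hij.ne', hj⟩))
    · exact .inl (hk i (mem_erase.mpr ⟨hik, hi⟩))
  · intro H
    by_cases hfail : ∃ k ∈ s, ¬P k
    · obtain ⟨k, hk, hPk⟩ := hfail
      refine ⟨k, hk, fun j hj => ?_⟩
      obtain ⟨hjk, hj⟩ := mem_erase.mp hj
      rcases hjk.lt_or_gt with hlt | hlt
      · exact (H j hj k hk hlt).resolve_right hPk
      · exact (H k hk j hj hlt).resolve_left hPk
    · push Not at hfail
      obtain ⟨k, hk⟩ := hs
      exact ⟨k, hk, fun j hj => hfail j (mem_of_mem_erase hj)⟩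

end Finset

namespace Finsupp

variable {σ : Type*}

theorem sum_single_one_le_iff {t : Finset σ} {e : σ →₀ ℕ} :
    ∑ j ∈ t, single j 1 ≤ e ↔ ∀ j ∈ t, e j ≠ 0 := by
  classical
  simp only [le_def, finsetSum_apply, single_apply, Finset.sum_ite_eq']
  refine ⟨fun H j hj => ?_, fun H j => ?_⟩
  · simpa [hj, Nat.one_le_iff_ne_zero] using H j
  · split_ifs with hj
    · exact Nat.one_le_iff_ne_zero.mpr (H j hj)
    · exact Nat.zero_le _

end Finsupp

namespace MvPolynomial

variable {σ R : Type*} [CommSemiring R]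

theorem pderiv_prod_X_of_notMem {s : Finset σ} {i : σ} (hi : i ∉ s) :
    pderiv i (∏ j ∈ s, X j : MvPolynomial σ R) = 0 := by
  classical
  induction s using Finset.induction_on with
  | empty => simp
  | insert a s ha ih =>
    rw [Finset.prod_insert ha, pderiv_mul, pderiv_X_of_ne (by grind), ih (by grind)]
    simp

theorem pderiv_prod_X [DecidableEq σ] (s : Finset σ) (i : σ) :
    pderiv i (∏ j ∈ s, X j : MvPolynomial σ R) = if i ∈ s then ∏ j ∈ s.erase i, X j else 0 := by
  split_ifs with hi
  · rw [← Finset.mul_prod_erase s X hi, pderiv_mul, pderiv_X_self,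
      pderiv_prod_X_of_notMem (s.notMem_erase i), one_mul, mul_zero, add_zero]
  · exact pderiv_prod_X_of_notMem hi

theorem span_range_pderiv_prod_X [DecidableEq σ] (s : Finset σ) :
    Ideal.span (Set.range fun i => pderiv i (∏ j ∈ s, X j : MvPolynomial σ R)) =
      Ideal.span ((fun k => ∏ j ∈ s.erase k, X j) '' s) := by
  apply le_antisymm <;> rw [Ideal.span_le]
  · rintro _ ⟨i, rfl⟩
    simp only [pderiv_prod_X]
    split_ifs with hi
    · exact Ideal.subset_span ⟨i, hi, rfl⟩
    · exact zero_mem _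
  · rintro _ ⟨k, hk, rfl⟩
    exact Ideal.subset_span ⟨k, by simp [pderiv_prod_X, Finset.mem_coe.mp hk]⟩

theorem prod_X_eq_monomial (s : Finset σ) :
    (∏ j ∈ s, X j : MvPolynomial σ R) = monomial (∑ j ∈ s, Finsupp.single j 1) 1 :=
  (monomial_sum_one s _).symm

theorem mem_span_X_pair_iff {p : MvPolynomial σ R} {i j : σ} :
    p ∈ Ideal.span {X i, X j} ↔ ∀ e ∈ p.support, e i ≠ 0 ∨ e j ≠ 0 := by
  rw [← Set.image_pair, mem_ideal_span_X_image]
  simp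

theorem mem_span_prod_X_erase_iff [DecidableEq σ] {s : Finset σ} {p : MvPolynomial σ R} :
    p ∈ Ideal.span ((fun k => ∏ j ∈ s.erase k, X j) '' s) ↔
      ∀ e ∈ p.support, ∃ k ∈ s, ∀ j ∈ s.erase k, e j ≠ 0 := by
  simp_rw [prod_X_eq_monomial]
  rw [← Set.image_image (fun e => monomial e (1 : R)), mem_ideal_span_monomial_image]
  simp only [Set.exists_mem_image, Finset.mem_coe, Finsupp.sum_single_one_le_iff]

theorem span_range_pderiv_prod_X_eq_iInf [LinearOrder σ] {s : Finset σ} (hs : s.Nonempty) :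
    Ideal.span (Set.range fun i => pderiv i (∏ j ∈ s, X j : MvPolynomial σ R)) =
      ⨅ i ∈ s, ⨅ j ∈ s, ⨅ (_ : i < j), Ideal.span {X i, X j} := by
  ext p
  simp only [span_range_pderiv_prod_X, mem_span_prod_X_erase_iff, Submodule.mem_iInf,
    mem_span_X_pair_iff, hs.exists_forall_mem_erase_iff_forall_lt_or]
  exact ⟨fun H i hi j hj hij e he => H e he i hi j hj hij,
    fun H e he i hi j hj hij => H i hi j hj hij e he⟩

end MvPolynomial

open MvPolynomial

theorem jacobian_ideal_of_normal_crossing_eq_inf_pairs_general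
    (K : Type*) [Field K] (n m : ℕ) (hm2 : 2 ≤ m) (hmn : m ≤ n)
    (h : MvPolynomial (Fin n) K)
    (hh : h = ∏ i ∈ Finset.univ.filter (fun i : Fin n => (i : ℕ) < m), X i) :
    Ideal.span (Set.range fun i : Fin n => pderiv i h) =
      ⨅ (i : Fin n) (j : Fin n) (_ : (i : ℕ) < (j : ℕ)) (_ : (j : ℕ) < m),
        Ideal.span {X i, X j} := by
  have hs : (Finset.univ.filter fun i : Fin n => (i : ℕ) < m).Nonempty :=
    ⟨⟨0, by omega⟩, by simp; omega⟩
  rw [hh, span_range_pderiv_prod_X_eq_iInf hs]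
  ext p
  simp only [Submodule.mem_iInf, Finset.mem_filter, Finset.mem_univ, true_and]
  exact ⟨fun H i j hij hjm => H i (hij.trans hjm) j hjm hij, fun H i _ j hjm hij => H i j hij hjm⟩

/-- For the normal crossing polynomial `h = X 0 * X 1 * ⋯ * X (m-1)` in
`MvPolynomial (Fin n) K`, the Jacobian ideal generated by all partial derivatives
equals the intersection of the pair ideals `(X i, X j)` for `i < j < m`. -/
theorem jacobian_ideal_of_normal_crossing_eq_inf_pairs
    (K : Type*) [Field K] (n m : ℕ) (hn : 2 ≤ n) (hm2 : 2 ≤ m) (hmn : m ≤ n)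
    (h : MvPolynomial (Fin n) K)
    (hh : h = ∏ i ∈ Finset.univ.filter (fun i : Fin n => (i : ℕ) < m), X i) :
    Ideal.span (Set.range fun i : Fin n => pderiv i h) =
      ⨅ (i : Fin n) (j : Fin n) (_ : (i : ℕ) < (j : ℕ)) (_ : (j : ℕ) < m),
        Ideal.span {X i, X j} :=
  jacobian_ideal_of_normal_crossing_eq_inf_pairs_general K n m hm2 hmn h hh
end

section
/- There is no polynomial h ∈ ℂ[x, y, z] = MvPolynomial (Fin 3) ℂ such that the ideal generated by its three partial derivatives pderiv 0 h, pderiv 1 h, pderiv 2 h equals the ideal Ideal.span {X 0 ^ 3 − X 1 ^ 2, X 2} defining the cusp curve. -/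
/-!
Suppose `J_h = (x³ - y², z)`. Every element of this ideal has vanishing coefficients at
`1, x, y, xy, x²y`, and its coefficients at `x³` and `y²` are opposite. Applied to the partials
and combined with the symmetry `∂ᵢ∂ⱼh = ∂ⱼ∂ᵢh` at the level of coefficients, this kills the
coefficients of `z` and `y²` in `∂ₓh` and `∂_yh`. Hence for any combination
`a ∂ₓh + b ∂_yh + c ∂_zh` the pair of coefficients at `(z, y²)` is `c(0)` times that of `∂_zh`,
so all these pairs lie on one line. But the generators `z` and `x³ - y²` have the independent
pairs `(1, 0)` and `(0, -1)`.
-/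

open MvPolynomial

namespace MvPolynomial

variable {σ R : Type*} [CommSemiring R]

theorem coeff_add_single_pderiv_eq_zero_comm [NoZeroDivisors R] [CharZero R] {i j : σ}
    (hij : i ≠ j) (m : σ →₀ ℕ) (p : MvPolynomial σ R) :
    coeff (m + Finsupp.single j 1) (pderiv i p) = 0 ↔
      coeff (m + Finsupp.single i 1) (pderiv j p) = 0 := by
  rw [coeff_pderiv, coeff_pderiv, add_right_comm]
  simp [hij, hij.symm, Nat.cast_add_one_ne_zero]

theorem coeff_mul_eq_constantCoeff_mul {m : σ →₀ ℕ} {f : MvPolynomial σ R}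
    (hf : ∀ n < m, coeff n f = 0) (a : MvPolynomial σ R) :
    coeff m (a * f) = constantCoeff a * coeff m f := by
  classical
  rw [coeff_mul, Finset.sum_eq_single (0, m), constantCoeff_eq]
  · rintro ⟨u, v⟩ huv hne
    rw [Finset.HasAntidiagonal.mem_antidiagonal] at huv
    have hv : v ≠ m := by rintro rfl; simp_all
    rw [hf v (lt_of_le_of_ne (huv ▸ le_add_self) hv), mul_zero]
  · simp

end MvPolynomial

section Cusp

variable {R : Type*} [CommRing R]

noncomputable abbrev cuspIdeal (R : Type*) [CommRing R] : Ideal (MvPolynomial (Fin 3) R) :=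
  Ideal.span {X 0 ^ 3 - X 1 ^ 2, X 2}

theorem cuspIdeal_le_span_monomial :
    cuspIdeal R ≤ Ideal.span ((fun s => monomial s (1 : R)) ''
      {Finsupp.single 0 3, Finsupp.single 1 2, Finsupp.single 2 1}) := by
  rw [Ideal.span_le, Set.insert_subset_iff, Set.singleton_subset_iff, ← pow_one (X 2),
    X_pow_eq_monomial, X_pow_eq_monomial, X_pow_eq_monomial]
  exact ⟨sub_mem (Ideal.subset_span ⟨_, by simp, rfl⟩) (Ideal.subset_span ⟨_, by simp, rfl⟩),
    Ideal.subset_span ⟨_, by simp, rfl⟩⟩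

theorem coeff_eq_zero_of_mem_cuspIdeal {F : MvPolynomial (Fin 3) R} (hF : F ∈ cuspIdeal R)
    {n : Fin 3 →₀ ℕ}
    (hn : ∀ s ∈ ({Finsupp.single 0 3, Finsupp.single 1 2, Finsupp.single 2 1} : Set _), ¬ s ≤ n) :
    coeff n F = 0 := by
  by_contra hF₀
  obtain ⟨s, hs, hsn⟩ := mem_ideal_span_monomial_image.1 (cuspIdeal_le_span_monomial hF) n
    (mem_support_iff.2 hF₀)
  exact hn s hs hsn

theorem coeff_eq_zero_of_mem_cuspIdeal_of_lt {F : MvPolynomial (Fin 3) R} (hF : F ∈ cuspIdeal R)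
    {m : Fin 3 →₀ ℕ} (hm : m ∈ ({Finsupp.single 1 2, Finsupp.single 2 1} : Set (Fin 3 →₀ ℕ)))
    {n : Fin 3 →₀ ℕ} (hn : n < m) : coeff n F = 0 :=
  coeff_eq_zero_of_mem_cuspIdeal hF fun s hs hsn => by
    have hsm := hsn.trans_lt hn
    rcases hs with rfl | rfl | rfl <;> rcases hm with rfl | rfl <;>
      simp [lt_iff_le_not_ge, Finsupp.single_le_iff] at hsm

theorem coeff_cube_add_coeff_sq_eq_zero_of_mem_cuspIdeal {F : MvPolynomial (Fin 3) R}
    (hF : F ∈ cuspIdeal R) : coeff (Finsupp.single 0 3) F + coeff (Finsupp.single 1 2) F = 0 := by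
  obtain ⟨p, q, rfl⟩ := Ideal.mem_span_pair.1 hF
  simp only [X_pow_eq_monomial, mul_sub, coeff_add, coeff_sub, coeff_mul_monomial', coeff_mul_X']
  simp [Finsupp.single_le_iff]

variable [NoZeroDivisors R] [CharZero R] {h : MvPolynomial (Fin 3) R}

theorem coeff_pderiv_eq_zero_of_pderiv_mem_cuspIdeal (hI : ∀ i, pderiv i h ∈ cuspIdeal R)
    {i : Fin 3} (hi : i ≠ 2) {m : Fin 3 →₀ ℕ}
    (hm : m ∈ ({Finsupp.single 1 2, Finsupp.single 2 1} : Set (Fin 3 →₀ ℕ))) :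
    coeff m (pderiv i h) = 0 := by
  fin_cases i <;> rcases hm with rfl | rfl
  · simpa [← Finsupp.single_add] using (coeff_add_single_pderiv_eq_zero_comm
      (by decide : (0 : Fin 3) ≠ 1) (Finsupp.single 1 1) h).2
        (coeff_eq_zero_of_mem_cuspIdeal (hI 1) (by simp [Finsupp.single_le_iff]))
  · simpa using (coeff_add_single_pderiv_eq_zero_comm (by decide : (0 : Fin 3) ≠ 2) 0 h).2
      (coeff_eq_zero_of_mem_cuspIdeal (hI 2) (by simp [Finsupp.single_le_iff]))
  · -- `[x³]∂_yh` vanishes together with `[x²y]∂ₓh`, and `[y²]∂_yh = -[x³]∂_yh`.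
    have hcube := (coeff_add_single_pderiv_eq_zero_comm (by decide : (1 : Fin 3) ≠ 0)
      (Finsupp.single 0 2) h).2
        (coeff_eq_zero_of_mem_cuspIdeal (hI 0) (by simp [Finsupp.single_le_iff]))
    rw [← Finsupp.single_add] at hcube
    simpa [hcube] using coeff_cube_add_coeff_sq_eq_zero_of_mem_cuspIdeal (hI 1)
  · simpa using (coeff_add_single_pderiv_eq_zero_comm (by decide : (1 : Fin 3) ≠ 2) 0 h).2
      (coeff_eq_zero_of_mem_cuspIdeal (hI 2) (by simp [Finsupp.single_le_iff]))
  all_goals exact absurd rfl hi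

theorem coeff_smul_pderiv_add_eq_constantCoeff_mul (hI : ∀ i, pderiv i h ∈ cuspIdeal R)
    {m : Fin 3 →₀ ℕ} (hm : m ∈ ({Finsupp.single 1 2, Finsupp.single 2 1} : Set (Fin 3 →₀ ℕ)))
    (a b c : MvPolynomial (Fin 3) R) :
    coeff m (a • pderiv 0 h + b • pderiv 1 h + c • pderiv 2 h) =
      constantCoeff c * coeff m (pderiv 2 h) := by
  simp only [smul_eq_mul, coeff_add,
    coeff_mul_eq_constantCoeff_mul fun _ => coeff_eq_zero_of_mem_cuspIdeal_of_lt (hI _) hm,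
    coeff_pderiv_eq_zero_of_pderiv_mem_cuspIdeal hI (by decide : (0 : Fin 3) ≠ 2) hm,
    coeff_pderiv_eq_zero_of_pderiv_mem_cuspIdeal hI (by decide : (1 : Fin 3) ≠ 2) hm]
  ring

end Cusp

/-- The cusp ideal `(X 0 ^ 3 - X 1 ^ 2, X 2)` in `ℂ[x, y, z]` is not the Jacobian
ideal of any polynomial `h`. -/
theorem cusp_ideal_not_jacobian :
    ¬ ∃ h : MvPolynomial (Fin 3) ℂ,
      Ideal.span {pderiv 0 h, pderiv 1 h, pderiv 2 h} =
        Ideal.span {X 0 ^ 3 - X 1 ^ 2, X 2} := by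
  rintro ⟨h, hJ⟩
  have hI : ∀ i, pderiv i h ∈ cuspIdeal ℂ := fun i =>
    hJ.le (Ideal.subset_span (by fin_cases i <;> simp))
  have hgen : ∀ g ∈ cuspIdeal ℂ, ∃ a b c : MvPolynomial (Fin 3) ℂ,
      a • pderiv 0 h + b • pderiv 1 h + c • pderiv 2 h = g := fun g hg =>
    Submodule.mem_span_triple.1 (hJ.ge hg)
  obtain ⟨a₀, a₁, a₂, ha⟩ := hgen (X 2) (Ideal.subset_span (by simp))
  obtain ⟨b₀, b₁, b₂, hb⟩ := hgen (X 0 ^ 3 - X 1 ^ 2) (Ideal.subset_span (by simp))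
  have hz : constantCoeff a₂ * coeff (Finsupp.single 2 1) (pderiv 2 h) = 1 := by
    rw [← coeff_smul_pderiv_add_eq_constantCoeff_mul hI (by simp) a₀ a₁, ha, coeff_X, if_pos rfl]
  have hgz : constantCoeff b₂ * coeff (Finsupp.single 2 1) (pderiv 2 h) = 0 := by
    rw [← coeff_smul_pderiv_add_eq_constantCoeff_mul hI (by simp) b₀ b₁, hb]
    simp [X_pow_eq_monomial, coeff_monomial, Finsupp.single_eq_single_iff]
  have hgy : constantCoeff b₂ * coeff (Finsupp.single 1 2) (pderiv 2 h) = -1 := by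
    rw [← coeff_smul_pderiv_add_eq_constantCoeff_mul hI (by simp) b₀ b₁, hb]
    simp [X_pow_eq_monomial, coeff_monomial, Finsupp.single_eq_single_iff]
  have : (1 : ℂ) = 0 := by
    linear_combination hgy - coeff (Finsupp.single 1 2) (pderiv 2 h) * constantCoeff a₂ * hgz
      + constantCoeff b₂ * coeff (Finsupp.single 1 2) (pderiv 2 h) * hz
  exact one_ne_zero this
end

section
/- There is no polynomial h ∈ ℂ[x, y, z, w] = MvPolynomial (Fin 4) ℂ such that the ideal generated by its four partial derivatives pderiv 0 h, pderiv 1 h, pderiv 2 h, pderiv 3 h equals the ideal Ideal.span {X 0 * X 2, X 0 * X 3, X 1 * X 2, X 1 * X 3}. -/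
/-!
If `(∂h) = (xz, xw, yz, yw)`, every partial derivative of `h` lies in `(x, y) ∩ (z, w)`, so it has
no monomial involving only `x, y` or only `z, w`. By symmetry of second derivatives the coefficient
of `xz` in `∂ᵢh` is, up to a nonzero integer, the coefficient of `xz·xᵢ` in `h`, which is in turn
a coefficient of `∂_z h` at `x·xᵢ` (for `i = x, y`) or of `∂_x h` at `z·xᵢ` (for `i = z, w`), hence
zero. Thus no partial derivative has a monomial dividing `xz`, and neither does any element of the
ideal they generate; but `xz` itself should be one.
-/

open MvPolynomial

namespace MvPolynomial

variable {σ R : Type*} [CommSemiring R]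

theorem coeff_pderiv_eq_zero_iff [CharZero R] [NoZeroDivisors R] {i : σ} {p : MvPolynomial σ R}
    {m : σ →₀ ℕ} : coeff m (pderiv i p) = 0 ↔ coeff (m + Finsupp.single i 1) p = 0 := by
  rw [coeff_pderiv, mul_eq_zero, or_iff_left]
  exact Nat.cast_add_one_ne_zero _

theorem coeff_eq_zero_of_mem_span_X_image {s : Set σ} {p : MvPolynomial σ R}
    (hp : p ∈ Ideal.span (X '' s)) {m : σ →₀ ℕ} (hm : ∀ i ∈ s, m i = 0) : coeff m p = 0 := by
  by_contra hne
  obtain ⟨i, hi, hmi⟩ := mem_ideal_span_X_image.mp hp m (mem_support_iff.mpr hne)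
  exact hmi (hm i hi)

theorem X_mul_X_mem_ideal_span_X_image {s : Set σ} {a b : σ} (h : a ∈ s ∨ b ∈ s) :
    (X a * X b : MvPolynomial σ R) ∈ Ideal.span (X '' s) := by
  rcases h with ha | hb
  · exact Ideal.mul_mem_right _ _ (Ideal.subset_span ⟨a, ha, rfl⟩)
  · exact Ideal.mul_mem_left _ _ (Ideal.subset_span ⟨b, hb, rfl⟩)

theorem mem_ideal_span_monomial_not_le_iff {m : σ →₀ ℕ} {p : MvPolynomial σ R} :
    p ∈ Ideal.span ((monomial · (1 : R)) '' {n | ¬ n ≤ m}) ↔ ∀ n ≤ m, coeff n p = 0 := by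
  rw [mem_ideal_span_monomial_image]
  refine ⟨fun hp n hn => ?_, fun hp n hn => ⟨n, fun hle => mem_support_iff.mp hn (hp n hle), le_rfl⟩⟩
  by_contra hne
  obtain ⟨k, hk, hkn⟩ := hp n (mem_support_iff.mpr hne)
  exact hk (hkn.trans hn)

theorem coeff_eq_zero_of_mem_ideal_span {S : Set (MvPolynomial σ R)} {m : σ →₀ ℕ}
    (hS : ∀ p ∈ S, ∀ n ≤ m, coeff n p = 0) {q : MvPolynomial σ R} (hq : q ∈ Ideal.span S) :
    coeff m q = 0 :=
  mem_ideal_span_monomial_not_le_iff.mp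
    (Ideal.span_le.mpr (fun p hp => mem_ideal_span_monomial_not_le_iff.mpr (hS p hp)) hq) m le_rfl

end MvPolynomial

section TwoPlanes

open Finsupp (single)

variable {R : Type*} [CommSemiring R]

/-- `(x, y) ∩ (z, w)`, writing `x, y, z, w` for `X 0, X 1, X 2, X 3`. -/
noncomputable abbrev twoPlanesIdeal : Ideal (MvPolynomial (Fin 4) R) :=
  Ideal.span {X 0 * X 2, X 0 * X 3, X 1 * X 2, X 1 * X 3}

theorem twoPlanesIdeal_le_span_X01 :
    twoPlanesIdeal ≤ Ideal.span (X '' {0, 1} : Set (MvPolynomial (Fin 4) R)) := by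
  simp [Ideal.span_le, Set.insert_subset_iff, X_mul_X_mem_ideal_span_X_image]

theorem twoPlanesIdeal_le_span_X23 :
    twoPlanesIdeal ≤ Ideal.span (X '' {2, 3} : Set (MvPolynomial (Fin 4) R)) := by
  simp [Ideal.span_le, Set.insert_subset_iff, X_mul_X_mem_ideal_span_X_image]

theorem coeff_eq_zero_of_mem_twoPlanesIdeal {p : MvPolynomial (Fin 4) R}
    (hp : p ∈ twoPlanesIdeal) {n : Fin 4 →₀ ℕ} (hn : (n 0 = 0 ∧ n 1 = 0) ∨ (n 2 = 0 ∧ n 3 = 0)) :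
    coeff n p = 0 := by
  rcases hn with ⟨h0, h1⟩ | ⟨h2, h3⟩
  · exact coeff_eq_zero_of_mem_span_X_image (twoPlanesIdeal_le_span_X01 hp) (by simp [h0, h1])
  · exact coeff_eq_zero_of_mem_span_X_image (twoPlanesIdeal_le_span_X23 hp) (by simp [h2, h3])

variable [CharZero R] [NoZeroDivisors R]

theorem coeff_xz_add_single_eq_zero {h : MvPolynomial (Fin 4) R}
    (hJ : ∀ i, pderiv i h ∈ twoPlanesIdeal) (i : Fin 4) :
    coeff (single 0 1 + single 2 1 + single i 1) h = 0 := by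
  obtain hi | hi : (i = 0 ∨ i = 1) ∨ (i = 2 ∨ i = 3) := by fin_cases i <;> simp
  · rw [add_right_comm, ← coeff_pderiv_eq_zero_iff]
    exact coeff_eq_zero_of_mem_twoPlanesIdeal (hJ 2) (Or.inr (by rcases hi with rfl | rfl <;> simp))
  · rw [add_comm (single 0 1), add_right_comm, ← coeff_pderiv_eq_zero_iff]
    exact coeff_eq_zero_of_mem_twoPlanesIdeal (hJ 0) (Or.inl (by rcases hi with rfl | rfl <;> simp))

theorem coeff_pderiv_eq_zero_of_le_xz {h : MvPolynomial (Fin 4) R}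
    (hJ : ∀ i, pderiv i h ∈ twoPlanesIdeal) (i : Fin 4) {n : Fin 4 →₀ ℕ}
    (hn : n ≤ single 0 1 + single 2 1) : coeff n (pderiv i h) = 0 := by
  have hle (j : Fin 4) := Finsupp.le_def.mp hn j
  simp only [Finsupp.add_apply, Finsupp.single_apply] at hle
  by_cases h0 : n 0 = 0
  · exact coeff_eq_zero_of_mem_twoPlanesIdeal (hJ i) (Or.inl ⟨h0, by simpa using hle 1⟩)
  by_cases h2 : n 2 = 0
  · exact coeff_eq_zero_of_mem_twoPlanesIdeal (hJ i) (Or.inr ⟨h2, by simpa using hle 3⟩)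
  have hxz : n = single 0 1 + single 2 1 := by
    ext j
    have := hle j
    fin_cases j <;> simp at this ⊢ <;> omega
  exact hxz ▸ coeff_pderiv_eq_zero_iff.mpr (coeff_xz_add_single_eq_zero hJ i)

theorem X_zero_mul_X_two_not_mem_span_pderiv {h : MvPolynomial (Fin 4) R}
    (hJ : ∀ i, pderiv i h ∈ twoPlanesIdeal) :
    X 0 * X 2 ∉ Ideal.span {pderiv 0 h, pderiv 1 h, pderiv 2 h, pderiv 3 h} := by
  intro hmem
  have hS : ∀ p ∈ ({pderiv 0 h, pderiv 1 h, pderiv 2 h, pderiv 3 h} : Set _),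
      ∀ n ≤ single 0 1 + single 2 1, coeff n p = 0 := by
    simp only [Set.mem_insert_iff, Set.mem_singleton_iff]
    rintro p (rfl | rfl | rfl | rfl) <;> exact fun n => coeff_pderiv_eq_zero_of_le_xz hJ _
  have hcoeff := coeff_eq_zero_of_mem_ideal_span hS hmem
  simp [X, monomial_mul] at hcoeff

end TwoPlanes

/-- The radical ideal `(X0*X2, X0*X3, X1*X2, X1*X3) = (x,y) ∩ (z,w)` in `ℂ[x,y,z,w]`
is not the Jacobian ideal of any polynomial `h`. -/
theorem two_planes_ideal_not_jacobian :
    ¬ ∃ h : MvPolynomial (Fin 4) ℂ,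
      Ideal.span {pderiv 0 h, pderiv 1 h, pderiv 2 h, pderiv 3 h} =
        Ideal.span {X 0 * X 2, X 0 * X 3, X 1 * X 2, X 1 * X 3} := by
  rintro ⟨h, hJ⟩
  have hpderiv (i : Fin 4) : pderiv i h ∈ twoPlanesIdeal := by
    rw [twoPlanesIdeal, ← hJ]
    exact Ideal.subset_span (by fin_cases i <;> simp)
  exact X_zero_mul_X_two_not_mem_span_pderiv hpderiv (hJ ▸ Ideal.subset_span (by simp))
end

section
/- There is no polynomial h ∈ ℂ[x_1, …, x_6] = MvPolynomial (Fin 6) ℂ such that the ideal generated by its six partial derivatives pderiv i h (i < 6) equals the ideal generated by the nine products X i * X j for i ∈ {0,1,2} and j ∈ {3,4,5} (which is the intersection Ideal.span {X 0, X 1, X 2} ⊓ Ideal.span {X 3, X 4, X 5}). -/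
/-!
Every element of the ideal `J` vanishes to order two at the origin, and for such an element `g`
the quadratic part of `r * g` is `r(0)` times the quadratic part of `g`. Hence, if `J` were
generated by the six partial derivatives of `h`, the quadratic parts of elements of `J` would
lie in the `ℂ`-span of six polynomials. But they include the nine linearly independent monomials
`xᵢ xⱼ`, so this is the Nakayama bound `9 = dim J/𝔪J ≤ 6`.
-/

open MvPolynomial Function

namespace MvPolynomial

variable {σ R : Type*} [CommSemiring R]

/-- The ideal `𝔪ⁿ`, where `𝔪` is the ideal of the origin. -/
def orderIdeal (n : ℕ) : Ideal (MvPolynomial σ R) where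
  carrier := {p | ∀ d : σ →₀ ℕ, d.degree < n → coeff d p = 0}
  zero_mem' _ _ := coeff_zero _
  add_mem' hp hq d hd := by rw [coeff_add, hp d hd, hq d hd, add_zero]
  smul_mem' r p hp d hd := by
    classical
    rw [smul_eq_mul, coeff_mul]
    refine Finset.sum_eq_zero fun e he => ?_
    have hdeg : e.1.degree + e.2.degree = d.degree := by
      rw [← map_add, Finset.HasAntidiagonal.mem_antidiagonal.mp he]
    rw [hp e.2 (by omega), mul_zero]

theorem IsHomogeneous.mem_orderIdeal {p : MvPolynomial σ R} {m n : ℕ} (hp : p.IsHomogeneous m)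
    (hnm : n ≤ m) : p ∈ orderIdeal n :=
  fun _ hd => hp.coeff_eq_zero (by omega)

theorem coeff_mul_of_mem_orderIdeal {n : ℕ} {p : MvPolynomial σ R} (hp : p ∈ orderIdeal n)
    (r : MvPolynomial σ R) {d : σ →₀ ℕ} (hd : d.degree = n) :
    coeff d (r * p) = constantCoeff r * coeff d p := by
  classical
  rw [coeff_mul, Finset.sum_eq_single_of_mem (0, d) (by simp), constantCoeff_eq]
  rintro ⟨u, v⟩ huv hne
  have hdeg : u.degree + v.degree = n := by
    rw [← map_add, Finset.HasAntidiagonal.mem_antidiagonal.mp huv, hd]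
  have hu : u ≠ 0 := by
    rintro rfl
    exact hne (by simpa using huv)
  have : 0 < u.degree := Nat.pos_of_ne_zero ((Finsupp.degree_eq_zero_iff u).not.mpr hu)
  rw [hp v (by omega), mul_zero]

theorem homogeneousComponent_mul_of_mem_orderIdeal {n : ℕ} {p : MvPolynomial σ R}
    (hp : p ∈ orderIdeal n) (r : MvPolynomial σ R) :
    homogeneousComponent n (r * p) = constantCoeff r • homogeneousComponent n p := by
  ext d
  rw [coeff_smul, coeff_homogeneousComponent, coeff_homogeneousComponent]
  split_ifs with hd
  · exact coeff_mul_of_mem_orderIdeal hp r hd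
  · rw [smul_zero]

theorem homogeneousComponent_mem_span_of_mem_span {n : ℕ} {T : Set (MvPolynomial σ R)}
    (hT : Ideal.span T ≤ orderIdeal n) {p : MvPolynomial σ R} (hp : p ∈ Ideal.span T) :
    homogeneousComponent n p ∈ Submodule.span R (homogeneousComponent n '' T) := by
  induction hp using Submodule.span_induction with
  | mem q hq => exact Submodule.subset_span (Set.mem_image_of_mem _ hq)
  | zero => rw [map_zero]; exact zero_mem _
  | add p q _ _ hp hq => rw [map_add]; exact add_mem hp hq
  | smul r p hp hp' =>
    rw [smul_eq_mul, homogeneousComponent_mul_of_mem_orderIdeal (hT hp)]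
    exact Submodule.smul_mem _ _ hp'

theorem card_le_of_linearIndependent_homogeneousComponent {K ι κ : Type*} [Field K] [Fintype ι]
    [Fintype κ] {n : ℕ} {T : Set (MvPolynomial σ K)} (hT : Ideal.span T ≤ orderIdeal n)
    {f : ι → MvPolynomial σ K} (hfT : Ideal.span (Set.range f) = Ideal.span T)
    {v : κ → MvPolynomial σ K} (hvT : ∀ k, v k ∈ T)
    (hv : LinearIndependent K fun k => homogeneousComponent n (v k)) :
    Fintype.card κ ≤ Fintype.card ι := by
  have hf : Ideal.span (Set.range f) ≤ orderIdeal n := hfT ▸ hT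
  have hspan : Set.range (fun k => homogeneousComponent n (v k)) ⊆
      Submodule.span K (Set.range (homogeneousComponent n ∘ f)) := by
    rintro _ ⟨k, rfl⟩
    rw [Set.range_comp]
    exact homogeneousComponent_mem_span_of_mem_span hf (hfT ▸ Ideal.subset_span (hvT k))
  have := FiniteDimensional.span_of_finite K (Set.finite_range (homogeneousComponent n ∘ f))
  calc Fintype.card κ = Module.finrank K (Submodule.span K (Set.range _)) :=
        (finrank_span_eq_card hv).symm
    _ ≤ Module.finrank K (Submodule.span K (Set.range (homogeneousComponent n ∘ f))) :=
        Submodule.finrank_mono (Submodule.span_le.2 hspan)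
    _ ≤ Fintype.card ι := finrank_range_le_card _

theorem linearIndependent_X_mul_X {α β : Type*} {i : α → σ} {j : β → σ} (hi : Injective i)
    (hj : Injective j) (hij : ∀ a b, i a ≠ j b) :
    LinearIndependent R fun ab : α × β => (X (i ab.1) * X (j ab.2) : MvPolynomial σ R) := by
  have hinj :
      Injective fun ab : α × β => Finsupp.single (i ab.1) 1 + Finsupp.single (j ab.2) 1 := by
    rintro ⟨a, b⟩ ⟨a', b'⟩ h
    rcases (Finsupp.single_add_single_eq_single_add_single one_ne_zero one_ne_zero).mp h with
      ⟨ha, hb⟩ | ⟨-, h, -⟩ | ⟨h, -⟩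
    · exact Prod.ext (hi ha) (hj hb)
    · exact absurd h (hij a b')
    · exact absurd h (by norm_num)
  convert (basisMonomials σ R).linearIndependent.comp _ hinj with ab
  simp [X, monomial_mul]

end MvPolynomial

/-- The equidimensional radical ideal `(x₁,x₂,x₃) ∩ (x₄,x₅,x₆)`, generated by the nine
products `X i * X j` with `i ∈ {0,1,2}` and `j ∈ {3,4,5}`, in `ℂ[x₁,…,x₆]` is not the
Jacobian ideal of any polynomial `h`. -/
theorem two_three_planes_ideal_not_jacobian :
    ¬ ∃ h : MvPolynomial (Fin 6) ℂ,
      Ideal.span (Set.range fun i : Fin 6 => pderiv i h) =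
        Ideal.span { q : MvPolynomial (Fin 6) ℂ |
          ∃ i : Fin 6, ∃ j : Fin 6, (i : ℕ) < 3 ∧ 3 ≤ (j : ℕ) ∧ q = X i * X j } := by
  rintro ⟨h, hJ⟩
  have hXX (i j : Fin 6) : (X i * X j : MvPolynomial (Fin 6) ℂ).IsHomogeneous 2 :=
    (isHomogeneous_X ℂ i).mul (isHomogeneous_X ℂ j)
  have hind := linearIndependent_X_mul_X (R := ℂ) (Fin.castAdd_injective 3 3)
    (Fin.natAdd_injective 3 3) fun a b hab => by
      have := congrArg Fin.val hab
      simp only [Fin.val_castAdd, Fin.val_natAdd] at this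
      omega
  have hcard := card_le_of_linearIndependent_homogeneousComponent
    (Ideal.span_le.2 <| by rintro _ ⟨i, j, -, -, rfl⟩; exact (hXX i j).mem_orderIdeal le_rfl) hJ
    (fun ab : Fin 3 × Fin 3 => ⟨_, _, ab.1.isLt, Nat.le_add_right 3 ab.2, rfl⟩)
    (by simpa only [homogeneousComponent_eq_self (hXX _ _)] using hind)
  simp at hcard
end

section
/- Let h = (X 0 ^ 2 + X 1 ^ 2 + X 2 ^ 2) * (X 3 ^ 2 − X 4 ^ 2) in the polynomial ring ℂ[x, y, z, s, t] = MvPolynomial (Fin 5) ℂ. Then the Jacobian ideal of h, generated by the five partial derivatives pderiv i h (i < 5), equals the intersection Ideal.span {X 0, X 1, X 2} ⊓ Ideal.span {X 3 − X 4, X 0 ^ 2 + X 1 ^ 2 + X 2 ^ 2} ⊓ Ideal.span {X 3, X 4} ⊓ Ideal.span {X 3 + X 4, X 0 ^ 2 + X 1 ^ 2 + X 2 ^ 2}; in particular, the Jacobian ideal of h is radical. -/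
/-!
Write `q = x² + y² + z²` and `u = s² - t² = (s - t)(s + t)`. Since `q` and `u` involve disjoint
sets of variables, the Jacobian ideal of `q u` is `u (x, y, z) + q (s, t)`.

Each of the four ideals is prime: an ideal `(X j - g, p₁, …)` with `X j` absent from `g, p₁, …`
is the preimage of `(p₁, …)` under the retraction `X j ↦ g`, which reduces everything to the
primality of `(0)` and of `(q)`. The quadric `q = x² + (y² + z²)` is prime because a monic
quadratic over a domain is irreducible as soon as it has no root, and `-(y² + z²)` is not a square
since the prime `y - i z` divides `y² + z² = (y - i z)(y + i z)` exactly once.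

Prime ideals then make the intersection computable: `s - t ∉ (s + t, q)` gives
`(s - t, q) ∩ (s + t, q) = (u, q)`, and `u ∉ (x, y, z)`, `q ∉ (s, t)` give
`(u, q) ∩ (x, y, z) ∩ (s, t) = u (x, y, z) + q (s, t)`. An intersection of primes is radical.
-/

open MvPolynomial

namespace Ideal

variable {R : Type*} [CommRing R]

theorem eq_comap_of_sub_mem (φ : R →+* R) {I J : Ideal R} (hφ : ∀ p, p - φ p ∈ I)
    (hIJ : I.map φ ≤ J) (hJI : J ≤ I) : I = J.comap φ := by
  ext p
  refine ⟨fun hp => hIJ (mem_map_of_mem φ hp), fun hp => ?_⟩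
  simpa using add_mem (hφ p) (hJI hp)

theorem notMem_span_of_map_eq_zero {S : Type*} [Semiring S] (f : R →+* S) {s : Set R}
    (hs : ∀ x ∈ s, f x = 0) {p : R} (hp : f p ≠ 0) : p ∉ span s := fun h =>
  hp (span_le.mpr (fun x hx => (RingHom.mem_ker).mpr (hs x hx)) h)

theorem span_pair_inf_span_pair_eq_span_mul_pair {a b q : R} (hP : (span {b, q}).IsPrime)
    (ha : a ∉ span {b, q}) : span {a, q} ⊓ span {b, q} = span {a * b, q} := by
  refine le_antisymm (fun r hr => ?_) (le_inf ?_ ?_)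
  · obtain ⟨hra, hrb⟩ := hr
    obtain ⟨c, d, rfl⟩ := mem_span_pair.mp hra
    have hcb : c ∈ span {b, q} := by
      refine (hP.mem_or_mem ?_).resolve_right ha
      simpa using sub_mem hrb (mul_mem_left _ d (subset_span (by simp) : q ∈ span {b, q}))
    obtain ⟨e, f, rfl⟩ := mem_span_pair.mp hcb
    exact mem_span_pair.mpr ⟨e, f * a + d, by ring⟩
  · refine span_le.mpr ?_
    simp only [Set.insert_subset_iff, Set.singleton_subset_iff, SetLike.mem_coe]
    exact ⟨mul_mem_right _ _ (subset_span (by simp)), subset_span (by simp)⟩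
  · refine span_le.mpr ?_
    simp only [Set.insert_subset_iff, Set.singleton_subset_iff, SetLike.mem_coe]
    exact ⟨mul_mem_left _ _ (subset_span (by simp)), subset_span (by simp)⟩

theorem span_pair_inf_inf_eq_span_mul_sup_span_mul {u q : R} {P Q : Ideal R}
    (hP : P.IsPrime) (hQ : Q.IsPrime) (hqP : q ∈ P) (huQ : u ∈ Q) (huP : u ∉ P) (hqQ : q ∉ Q) :
    span {u, q} ⊓ P ⊓ Q = span {u} * P ⊔ span {q} * Q := by
  refine le_antisymm (fun r hr => ?_) (sup_le ?_ ?_)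
  · obtain ⟨⟨hr, hrP⟩, hrQ⟩ := hr
    obtain ⟨E, F, rfl⟩ := mem_span_pair.mp hr
    have hE : E ∈ P :=
      (hP.mem_or_mem (by simpa using sub_mem hrP (mul_mem_left _ F hqP))).resolve_right huP
    have hF : F ∈ Q :=
      (hQ.mem_or_mem (by simpa using sub_mem hrQ (mul_mem_left _ E huQ))).resolve_right hqQ
    rw [mul_comm E, mul_comm F]
    exact add_mem (mem_sup_left (mul_mem_mul (mem_span_singleton_self u) hE))
      (mem_sup_right (mul_mem_mul (mem_span_singleton_self q) hF))
  · refine le_inf (le_inf ?_ mul_le_right) ?_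
    · exact mul_le_left.trans (span_mono (by simp))
    · exact mul_le_left.trans ((span_singleton_le_iff_mem _).mpr huQ)
  · refine le_inf (le_inf ?_ ?_) mul_le_right
    · exact mul_le_left.trans (span_mono (by simp))
    · exact mul_le_left.trans ((span_singleton_le_iff_mem _).mpr hqP)

end Ideal

namespace MvPolynomial

variable {σ R : Type*} [CommRing R]

theorem sub_aeval_mem {f : σ → MvPolynomial σ R} {I : Ideal (MvPolynomial σ R)}
    (hf : ∀ i, X i - f i ∈ I) (p : MvPolynomial σ R) : p - aeval f p ∈ I := by
  have : Ideal.Quotient.mkₐ R I = (Ideal.Quotient.mkₐ R I).comp (aeval f) :=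
    algHom_ext fun i => by simpa [Ideal.Quotient.eq] using hf i
  exact Ideal.Quotient.eq.mp (DFunLike.congr_fun this p)

theorem aeval_update_X_of_notMem_vars [DecidableEq σ] {j : σ} (g : MvPolynomial σ R)
    {p : MvPolynomial σ R} (hp : j ∉ p.vars) : aeval (Function.update X j g) p = p := by
  conv_rhs => rw [← aeval_X_left_apply p]
  refine hom_congr_vars (by ext; simp) (fun i hi => ?_) rfl
  simp [Function.update_of_ne (ne_of_mem_of_not_mem hi hp)]

theorem isPrime_span_insert_X_sub [DecidableEq σ] {j : σ} {g : MvPolynomial σ R}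
    {s : Set (MvPolynomial σ R)} (hg : j ∉ g.vars) (hs : ∀ p ∈ s, j ∉ p.vars)
    (hprime : (Ideal.span s).IsPrime) : (Ideal.span (insert (X j - g) s)).IsPrime := by
  set φ := aeval (R := R) (Function.update X j g)
  have hgen : X j - g ∈ Ideal.span (insert (X j - g) s) := Ideal.subset_span (by simp)
  suffices h : Ideal.span (insert (X j - g) s) = (Ideal.span s).comap φ.toRingHom by
    rw [h]; exact Ideal.comap_isPrime _ _
  refine Ideal.eq_comap_of_sub_mem _ ?_ ?_ ?_
  · refine sub_aeval_mem fun i => ?_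
    rcases eq_or_ne i j with rfl | hij
    · simpa using hgen
    · simp [hij]
  · rw [Ideal.map_span, Ideal.span_le]
    rintro _ ⟨p, hp, rfl⟩
    rcases hp with rfl | hp
    · simp only [φ, AlgHom.toRingHom_eq_coe, RingHom.coe_coe, map_sub, aeval_X,
        Function.update_self, aeval_update_X_of_notMem_vars g hg, sub_self, SetLike.mem_coe,
        Ideal.zero_mem]
    · simpa only [φ, AlgHom.toRingHom_eq_coe, RingHom.coe_coe,
        aeval_update_X_of_notMem_vars g (hs p hp)] using Ideal.subset_span hp
  · exact Ideal.span_mono (Set.subset_insert _ _)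

theorem isPrime_span_insert_X [DecidableEq σ] {j : σ} {s : Set (MvPolynomial σ R)}
    (hs : ∀ p ∈ s, j ∉ p.vars) (hprime : (Ideal.span s).IsPrime) :
    (Ideal.span (insert (X j) s)).IsPrime := by
  simpa using isPrime_span_insert_X_sub (g := 0) (by simp) hs hprime

theorem isPrime_span_singleton_X_sub [IsDomain R] [DecidableEq σ] {j : σ}
    {g : MvPolynomial σ R} (hg : j ∉ g.vars) : (Ideal.span {X j - g}).IsPrime := by
  simpa using isPrime_span_insert_X_sub (s := ∅) hg (by simp) (by simpa using Ideal.isPrime_bot)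

theorem isPrime_span_X_pair [IsDomain R] [DecidableEq σ] {i j : σ} (hij : i ≠ j) :
    (Ideal.span {X i, X j} : Ideal (MvPolynomial σ R)).IsPrime :=
  isPrime_span_insert_X (by simp [hij]) ((Ideal.span_singleton_prime (X_ne_zero j)).mpr X_prime)

theorem isPrime_span_X_triple [IsDomain R] [DecidableEq σ] {i j k : σ} (hij : i ≠ j)
    (hik : i ≠ k) (hjk : j ≠ k) :
    (Ideal.span {X i, X j, X k} : Ideal (MvPolynomial σ R)).IsPrime :=
  isPrime_span_insert_X (by simp [hij, hik]) (isPrime_span_X_pair hjk)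

end MvPolynomial

theorem sq_add_mul_ne_zero_of_prime {A : Type*} [CommRing A] [IsDomain A] {p p' : A}
    (hp : Prime p) (hpp' : ¬p ∣ p') (b : A) : b ^ 2 + p * p' ≠ 0 := by
  intro h
  obtain ⟨c, rfl⟩ := hp.dvd_of_dvd_pow (show p ∣ b ^ 2 from ⟨-p', by linear_combination h⟩)
  have hc : p * (p * c ^ 2 + p') = 0 := by linear_combination h
  exact hpp' ⟨-c ^ 2, by linear_combination (mul_eq_zero.mp hc).resolve_left hp.ne_zero⟩

theorem Polynomial.irreducible_X_sq_add_C {A : Type*} [CommRing A] [IsDomain A] {c : A}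
    (hc : ∀ b : A, b ^ 2 + c ≠ 0) : Irreducible (Polynomial.X ^ 2 + Polynomial.C c) := by
  have hmonic : (Polynomial.X ^ 2 + Polynomial.C c).Monic :=
    Polynomial.monic_X_pow_add_C c two_ne_zero
  rw [hmonic.irreducible_iff_roots_eq_zero_of_degree_le_three (by simp) (by simp),
    Multiset.eq_zero_iff_forall_notMem]
  intro b hb
  exact hc b (by simpa using (Polynomial.mem_roots hmonic.ne_zero).mp hb)

namespace MvPolynomial

theorem sq_add_X_zero_sq_add_X_one_sq_ne_zero {n : ℕ} (b : MvPolynomial (Fin (n + 2)) ℂ) :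
    b ^ 2 + (X 0 ^ 2 + X 1 ^ 2) ≠ 0 := by
  have hprime : Prime (X 0 - C Complex.I * X 1 : MvPolynomial (Fin (n + 2)) ℂ) := by
    have hne : (X 0 - C Complex.I * X 1 : MvPolynomial (Fin (n + 2)) ℂ) ≠ 0 := fun h => by
      simpa using congrArg (eval (Pi.single 0 1)) h
    exact (Ideal.span_singleton_prime hne).mp (isPrime_span_singleton_X_sub (by simp [vars_C_mul]))
  have hdvd : ¬(X 0 - C Complex.I * X 1) ∣
      (X 0 + C Complex.I * X 1 : MvPolynomial (Fin (n + 2)) ℂ) := by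
    rw [← Ideal.mem_span_singleton]
    refine Ideal.notMem_span_of_map_eq_zero (eval (Pi.single 0 Complex.I + Pi.single 1 1))
      (by simp) ?_
    simp
  have hI : (C Complex.I : MvPolynomial (Fin (n + 2)) ℂ) ^ 2 = -1 := by
    rw [← map_pow]; simp
  have hprod : (X 0 - C Complex.I * X 1) * (X 0 + C Complex.I * X 1) =
      (X 0 ^ 2 + X 1 ^ 2 : MvPolynomial (Fin (n + 2)) ℂ) := by
    linear_combination (-(X 1 : MvPolynomial (Fin (n + 2)) ℂ) ^ 2) * hI
  simpa [hprod] using sq_add_mul_ne_zero_of_prime hprime hdvd b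

theorem prime_X_zero_sq_add_X_one_sq_add_X_two_sq {n : ℕ} :
    Prime (X 0 ^ 2 + X 1 ^ 2 + X 2 ^ 2 : MvPolynomial (Fin (n + 3)) ℂ) := by
  have himg : finSuccEquiv ℂ (n + 2) (X 0 ^ 2 + X 1 ^ 2 + X 2 ^ 2) =
      Polynomial.X ^ 2 + Polynomial.C (X 0 ^ 2 + X 1 ^ 2) := by
    rw [← Fin.succ_zero_eq_one, ← Fin.succ_one_eq_two]
    simp only [map_add, map_pow, finSuccEquiv_X_zero, finSuccEquiv_X_succ]
    ring
  rw [← MulEquiv.prime_iff (finSuccEquiv ℂ (n + 2)).toMulEquiv]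
  simpa [himg] using
    (Polynomial.irreducible_X_sq_add_C (sq_add_X_zero_sq_add_X_one_sq_ne_zero (n := n))).prime

end MvPolynomial

section SplayedExample

open Ideal

local notation "𝔮" => (X 0 ^ 2 + X 1 ^ 2 + X 2 ^ 2 : MvPolynomial (Fin 5) ℂ)

theorem vars_quadric_subset : (𝔮).vars ⊆ {0, 1, 2} := by
  refine (vars_add_subset _ _).trans (Finset.union_subset
    ((vars_add_subset _ _).trans (Finset.union_subset ?_ ?_)) ?_) <;>
    exact (vars_pow _ _).trans (by simp [vars_X])

theorem isPrime_span_X_three_sub_quadric {g : MvPolynomial (Fin 5) ℂ} (hg : 3 ∉ g.vars) :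
    (span {X 3 - g, 𝔮}).IsPrime :=
  isPrime_span_insert_X_sub hg (by simpa using fun h => absurd (vars_quadric_subset h) (by decide))
    ((span_singleton_prime prime_X_zero_sq_add_X_one_sq_add_X_two_sq.ne_zero).mpr
      prime_X_zero_sq_add_X_one_sq_add_X_two_sq)

theorem isPrime_span_X_three_add_X_four_quadric : (span {X 3 + X 4, 𝔮}).IsPrime := by
  simpa using isPrime_span_X_three_sub_quadric (g := -X 4) (by simp)

theorem span_range_pderiv_quadric_mul :
    span (Set.range fun i : Fin 5 => pderiv i (𝔮 * (X 3 ^ 2 - X 4 ^ 2))) =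
      span {X 3 ^ 2 - X 4 ^ 2} * span {X 0, X 1, X 2} ⊔ span {𝔮} * span {X 3, X 4} := by
  have h2 : IsUnit (2 : MvPolynomial (Fin 5) ℂ) := by
    simpa only [map_ofNat] using (IsUnit.mk0 (2 : ℂ) two_ne_zero).map (C (σ := Fin 5))
  simp only [Fin.range_fin_succ, Fin.tail, Set.range_unique]
  simp [span_insert, Ideal.mul_sup, span_singleton_mul_span_singleton,
    mul_left_comm _ (2 : MvPolynomial (Fin 5) ℂ), span_singleton_mul_left_unit h2, sup_assoc]

theorem inf_components_eq :
    span {X 0, X 1, X 2} ⊓ span {X 3 - X 4, 𝔮} ⊓ span {X 3, X 4} ⊓ span {X 3 + X 4, 𝔮} =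
      span {X 3 ^ 2 - X 4 ^ 2} * span {X 0, X 1, X 2} ⊔ span {𝔮} * span {X 3, X 4} := by
  have hcone : span {X 3 - X 4, 𝔮} ⊓ span {X 3 + X 4, 𝔮} = span {X 3 ^ 2 - X 4 ^ 2, 𝔮} := by
    rw [span_pair_inf_span_pair_eq_span_mul_pair,
      show (X 3 - X 4) * (X 3 + X 4) = (X 3 ^ 2 - X 4 ^ 2 : MvPolynomial (Fin 5) ℂ) by ring]
    · exact isPrime_span_X_three_add_X_four_quadric
    · exact notMem_span_of_map_eq_zero (eval (Pi.single 3 1 - Pi.single 4 1)) (by simp)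
        (by simp)
  rw [show ∀ a b c d : Ideal (MvPolynomial (Fin 5) ℂ), a ⊓ b ⊓ c ⊓ d = b ⊓ d ⊓ a ⊓ c from
    fun _ _ _ _ => by ac_rfl, hcone]
  refine span_pair_inf_inf_eq_span_mul_sup_span_mul
    (isPrime_span_X_triple (by decide) (by decide) (by decide)) (isPrime_span_X_pair (by decide))
    ?_ ?_ ?_ ?_
  · refine add_mem (add_mem ?_ ?_) ?_ <;>
      exact pow_mem_of_mem _ (subset_span (by simp)) 2 two_pos
  · refine sub_mem ?_ ?_ <;> exact pow_mem_of_mem _ (subset_span (by simp)) 2 two_pos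
  · exact notMem_span_of_map_eq_zero (eval (Pi.single 3 1)) (by simp) (by simp)
  · exact notMem_span_of_map_eq_zero (eval (Pi.single 0 1)) (by simp) (by simp)

end SplayedExample

/-- For `h = (x² + y² + z²)(s² - t²)` in `ℂ[x,y,z,s,t]`, the Jacobian ideal of `h`
equals the intersection `(x,y,z) ∩ (s-t, x²+y²+z²) ∩ (s,t) ∩ (s+t, x²+y²+z²)`;
in particular it is radical. -/
theorem jacobian_of_splayed_example_eq_inf_and_isRadical
    (h : MvPolynomial (Fin 5) ℂ)
    (hh : h = (X 0 ^ 2 + X 1 ^ 2 + X 2 ^ 2) * (X 3 ^ 2 - X 4 ^ 2)) :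
    Ideal.span (Set.range fun i : Fin 5 => pderiv i h) =
      Ideal.span {X 0, X 1, X 2} ⊓
        Ideal.span {X 3 - X 4, X 0 ^ 2 + X 1 ^ 2 + X 2 ^ 2} ⊓
        Ideal.span {X 3, X 4} ⊓
        Ideal.span {X 3 + X 4, X 0 ^ 2 + X 1 ^ 2 + X 2 ^ 2} ∧
    (Ideal.span (Set.range fun i : Fin 5 => pderiv i h)).IsRadical := by
  subst hh
  rw [span_range_pderiv_quadric_mul, ← inf_components_eq]
  exact ⟨rfl, (((isPrime_span_X_triple (by decide) (by decide) (by decide)).isRadical.inf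
    (isPrime_span_X_three_sub_quadric (by simp)).isRadical).inf
    (isPrime_span_X_pair (by decide)).isRadical).inf
    isPrime_span_X_three_add_X_four_quadric.isRadical⟩
end
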